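/- Let r ≥ 1 be an integer and n sufficiently large. Let G be a non-bipartite B_{r+1}-free simple graph on n vertices with e(G) ≥ ⌊(n−1)²/4⌋ + 2r, and let w₁w₂w₃ be a triangle in G with d*(w₁) ≥ d*(w₂) ≥ d*(w₃), where d*(w_i) denotes the number of neighbours of w_i outside {w₁, w₂, w₃}. Then d*(w₁) > n/3 − 2 and d*(w₂) ≥ n/4 − 1. -/

import Mathlib

/-!
A `B_{r+1}`-free graph on `m ≥ 12r + 12` vertices has at most `m²/4` edges: if it is
triangle-free this is Mantel's theorem, and otherwise deleting a triangle loses at most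
`m + 3r - 3` edges, because the three neighbourhoods pairwise share at most `r` vertices;
an induction on `m` with a correction term that dies out at `12r + 12` gives the bound.

Deleting the triangle `T = w₁w₂w₃` from `G` therefore leaves at most `(n-3)²/4` edges, so
`d*(w₁) + d*(w₂) + d*(w₃) = e(G) - 3 - e(G - T) ≥ n - 21/4 + 2r`, and `d*(w₁)` is at least a
third of this. Deleting only `w₂` and `w₃` leaves at most `(n-2)²/4` edges, which gives
`d*(w₂) + d*(w₃) ≥ n/2 - 4 + 2r ≥ n/2 - 2`.
-/

open SimpleGraph Set

/-- `G` contains no book `B_{r+1}`, i.e. no two adjacent vertices of `G` have at least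
`r + 1` common neighbours. -/
def BookFree {V : Type*} (r : ℕ) (G : SimpleGraph V) : Prop :=
  ∀ u v : V, G.Adj u v → ({w : V | G.Adj u w ∧ G.Adj v w}).ncard ≤ r

/-- `d_X(v)`: the number of neighbours of `v` lying in `X`. -/
noncomputable def degIn {V : Type*} (G : SimpleGraph V) (X : Set V) (v : V) : ℕ :=
  {w ∈ X | G.Adj v w}.ncard

open Finset

lemma card_compl_coe_finset {V : Type*} [Fintype V] [DecidableEq V] (S : Finset V) :
    Fintype.card ((S : Set V)ᶜ : Set V) = Fintype.card V - #S := by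
  simp [Finset.filter_not, Finset.card_univ_sdiff]

namespace SimpleGraph

variable {V : Type*} {G : SimpleGraph V}

section Counting

variable [Fintype V] [DecidableEq V] [DecidableRel G.Adj]

lemma filter_edgeFinset_avoiding_mem_eq_image {S : Finset V} {x : V} (hx : x ∉ S) :
    {e ∈ G.edgeFinset | (∀ v ∈ S, v ∉ e) ∧ x ∈ e} =
      (G.neighborFinset x \ S).image fun w => s(x, w) := by
  ext e
  simp only [Finset.mem_filter, Finset.mem_image, Finset.mem_sdiff, mem_neighborFinset,
    mem_edgeFinset]
  constructor
  · rintro ⟨he, hS, hxe⟩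
    obtain ⟨w, rfl⟩ := Sym2.mem_iff_exists.1 hxe
    exact ⟨w, ⟨he, fun hw => hS w hw (Sym2.mem_mk_right x w)⟩, rfl⟩
  · rintro ⟨w, ⟨hxw, hw⟩, rfl⟩
    refine ⟨hxw, fun v hv hve => ?_, Sym2.mem_mk_left x w⟩
    rcases Sym2.mem_iff.1 hve with rfl | rfl
    exacts [hx hv, hw hv]

lemma card_filter_edgeFinset_avoiding_add_sum_degree {S : Finset V}
    (hS : G.IsClique (S : Set V)) :
    #{e ∈ G.edgeFinset | ∀ v ∈ S, v ∉ e} + ∑ v ∈ S, G.degree v =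
      #G.edgeFinset + (#S).choose 2 := by
  induction S using Finset.induction_on with
  | empty => simp
  | insert x S hx ih =>
    rw [coe_insert, isClique_insert_of_notMem (by exact_mod_cast hx)] at hS
    have hSx : S ⊆ G.neighborFinset x := fun w hw => (mem_neighborFinset _ _ _).2 (hS.2 w hw)
    have hsplit := card_filter_add_card_filter_not
      (s := {e ∈ G.edgeFinset | ∀ v ∈ S, v ∉ e}) (p := fun e => x ∈ e)
    rw [filter_filter, filter_filter, filter_edgeFinset_avoiding_mem_eq_image hx,
      Finset.card_image_of_injective _ fun _ _ => Sym2.congr_right.1,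
      card_sdiff_of_subset hSx, card_neighborFinset_eq_degree] at hsplit
    have hdeg : #S ≤ G.degree x := card_neighborFinset_eq_degree G x ▸ card_le_card hSx
    have hinsert : {e ∈ G.edgeFinset | ∀ v ∈ insert x S, v ∉ e} =
        {e ∈ G.edgeFinset | (∀ v ∈ S, v ∉ e) ∧ x ∉ e} := by
      simp only [Finset.forall_mem_insert, and_comm]
    have hchoose : (#S + 1).choose 2 = (#S).choose 2 + #S := by
      rw [Nat.choose_succ_succ', Nat.choose_one_right, add_comm]
    rw [hinsert, sum_insert hx, card_insert_of_notMem hx, hchoose]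
    have := ih hS.1
    omega

lemma card_edgeFinset_add_choose_eq {S : Finset V} (hS : G.IsClique (S : Set V)) :
    #G.edgeFinset + (#S).choose 2 =
      #(G.induce ((S : Set V)ᶜ)).edgeFinset + ∑ v ∈ S, G.degree v := by
  have hinduce := congrArg Finset.card (G.map_edgeFinset_induce (s := (S : Set V)ᶜ))
  rw [Finset.card_map] at hinduce
  rw [← card_filter_edgeFinset_avoiding_add_sum_degree hS, hinduce,
    ← Finset.filter_mem_eq_inter]
  congr 3
  ext e
  simp [Finset.mem_sym2_iff, imp_not_comm]

end Counting

lemma CliqueFree.card_edgeFinset_le_sq_div_four [Fintype V] [DecidableRel G.Adj]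
    (hG : G.CliqueFree 3) : (#G.edgeFinset : ℝ) ≤ (Fintype.card V : ℝ) ^ 2 / 4 := by
  have h := hG.card_edgeFinset_le (r := 2)
  dsimp only at h
  rw [Nat.choose_eq_zero_of_lt (Nat.mod_lt _ two_pos)] at h
  calc (#G.edgeFinset : ℝ) ≤ ((Fintype.card V ^ 2 / 4 : ℕ) : ℝ) := Nat.cast_le.2 (by omega)
    _ ≤ (Fintype.card V : ℝ) ^ 2 / 4 := by exact_mod_cast Nat.cast_div_le

end SimpleGraph

lemma degIn_compl_add_card_sub_one {V : Type*} [Fintype V] [DecidableEq V] {G : SimpleGraph V}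
    [DecidableRel G.Adj] {S : Finset V} (hS : G.IsClique (S : Set V)) {v : V}
    (hv : v ∈ S) : degIn G ((S : Set V)ᶜ) v + (#S - 1) = G.degree v := by
  have hout : degIn G ((S : Set V)ᶜ) v = #{w ∈ G.neighborFinset v | w ∉ S} := by
    rw [degIn, ← Set.ncard_coe_finset]
    congr 1
    ext w
    simp [and_comm]
  have hin : {w ∈ G.neighborFinset v | w ∈ S} = S.erase v := by
    ext w
    simp only [Finset.mem_filter, mem_neighborFinset, Finset.mem_erase]
    exact ⟨fun h => ⟨h.1.ne', h.2⟩, fun h => ⟨hS hv h.2 h.1.symm, h.2⟩⟩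
  rw [hout, ← card_erase_of_mem hv, ← hin, add_comm, card_filter_add_card_filter_not,
    card_neighborFinset_eq_degree]

/-- Chosen so that `m ^ 2 / 4 + bookExcess r m` absorbs the `k + 3r` edges lost when a triangle
is deleted from a graph on `k + 3` vertices (`sq_div_four_add_bookExcess_add_le`), while
vanishing from `m = 12r + 12` on. -/
noncomputable def bookExcess (r m : ℕ) : ℝ :=
  max 0 ((12 * (r : ℝ) + 12 - m) * ((m : ℝ) + 12)) / 12

lemma bookExcess_nonneg (r m : ℕ) : 0 ≤ bookExcess r m :=
  div_nonneg (le_max_left _ _) (by norm_num)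

lemma bookExcess_eq_zero {r m : ℕ} (hm : 12 * r + 12 ≤ m) : bookExcess r m = 0 := by
  have hm' : (12 * r + 12 : ℝ) ≤ m := by exact_mod_cast hm
  rw [bookExcess, max_eq_left (mul_nonpos_of_nonpos_of_nonneg (by linarith) (by positivity)),
    zero_div]

lemma sq_div_four_add_bookExcess_add_le (r k : ℕ) :
    (k : ℝ) ^ 2 / 4 + bookExcess r k + (k + 3 * r) ≤
      ((k + 3 : ℕ) : ℝ) ^ 2 / 4 + bookExcess r (k + 3) := by
  unfold bookExcess
  push_cast
  have hk : (0 : ℝ) ≤ k := k.cast_nonneg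
  rcases le_or_gt (k : ℝ) (12 * r + 9) with h₁ | h₁
  · rw [max_eq_right (mul_nonneg (by linarith) (by linarith)),
      max_eq_right (mul_nonneg (by linarith) (by linarith))]
    nlinarith
  rcases le_or_gt (k : ℝ) (12 * r + 12) with h₂ | h₂
  · rw [max_eq_right (mul_nonneg (by linarith) (by linarith)),
      max_eq_left (mul_nonpos_of_nonpos_of_nonneg (by linarith) (by linarith))]
    nlinarith
  · rw [max_eq_left (mul_nonpos_of_nonpos_of_nonneg (by linarith) (by linarith)),
      max_eq_left (mul_nonpos_of_nonpos_of_nonneg (by linarith) (by linarith))]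
    nlinarith

namespace BookFree

variable {V : Type*} {G : SimpleGraph V} {r : ℕ}

lemma card_neighborFinset_inter_le [Fintype V] [DecidableEq V] [DecidableRel G.Adj]
    (hb : BookFree r G) {u v : V} (huv : G.Adj u v) :
    #(G.neighborFinset u ∩ G.neighborFinset v) ≤ r := by
  have h := hb u v huv
  rw [Set.ncard_eq_toFinset_card'] at h
  convert h using 2
  ext w
  simp

lemma sum_degree_le [Fintype V] [DecidableEq V] [DecidableRel G.Adj]
    (hb : BookFree r G) {t : Finset V} (ht : G.IsClique (t : Set V)) :
    ∑ v ∈ t, G.degree v ≤ #(t.biUnion (G.neighborFinset ·)) + (#t).choose 2 * r := by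
  induction t using Finset.induction_on with
  | empty => simp
  | insert x t hx ih =>
    rw [Finset.coe_insert, isClique_insert_of_notMem (by exact_mod_cast hx)] at ht
    have hcommon : #(G.neighborFinset x ∩ t.biUnion (G.neighborFinset ·)) ≤ #t * r := by
      rw [Finset.inter_biUnion]
      refine Finset.card_biUnion_le.trans ?_
      rw [← smul_eq_mul, ← Finset.sum_const]
      exact Finset.sum_le_sum fun v hv => hb.card_neighborFinset_inter_le (ht.2 v hv)
    have hunion :=
      Finset.card_union_add_card_inter (G.neighborFinset x) (t.biUnion (G.neighborFinset ·))
    have hchoose : (#t + 1).choose 2 = (#t).choose 2 + #t := by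
      rw [Nat.choose_succ_succ', Nat.choose_one_right, add_comm]
    rw [Finset.sum_insert hx, Finset.biUnion_insert, Finset.card_insert_of_notMem hx, hchoose,
      ← card_neighborFinset_eq_degree, add_mul]
    have := ih ht.1
    omega

lemma induce [Finite V] (hb : BookFree r G) (s : Set V) : BookFree r (G.induce s) := by
  intro u v huv
  calc {w : s | (G.induce s).Adj u w ∧ (G.induce s).Adj v w}.ncard
      = (Subtype.val '' {w : s | (G.induce s).Adj u w ∧ (G.induce s).Adj v w}).ncard :=
        (Set.ncard_image_of_injective _ Subtype.val_injective).symm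
    _ ≤ {w : V | G.Adj u w ∧ G.Adj v w}.ncard :=
        Set.ncard_le_ncard (by rintro _ ⟨w, hw, rfl⟩; exact hw)
    _ ≤ r := hb u v huv

theorem card_edgeFinset_le_add_bookExcess [Fintype V] [DecidableRel G.Adj]
    (hb : BookFree r G) :
    (#G.edgeFinset : ℝ) ≤ (Fintype.card V : ℝ) ^ 2 / 4 + bookExcess r (Fintype.card V) := by
  classical
  induction hm : Fintype.card V using Nat.strong_induction_on generalizing V with
  | _ m ih =>
  by_cases hG : G.CliqueFree 3
  · have := hG.card_edgeFinset_le_sq_div_four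
    rw [hm] at this
    linarith [bookExcess_nonneg r m]
  obtain ⟨t, ht⟩ : ∃ t, G.IsNClique 3 t := by simpa [CliqueFree] using hG
  have hdeg : ∑ v ∈ t, G.degree v ≤ m + 3 * r := by
    have hsum := hb.sum_degree_le ht.isClique
    have hunion := card_le_univ (t.biUnion (G.neighborFinset ·))
    rw [ht.card_eq] at hsum
    norm_num at hsum
    omega
  have hsplit := card_edgeFinset_add_choose_eq ht.isClique
  rw [ht.card_eq] at hsplit
  obtain ⟨k, rfl⟩ : ∃ k, m = k + 3 :=
    ⟨m - 3, by have := ht.card_eq ▸ card_le_univ t; omega⟩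
  have hrest :=
    ih k (by omega) (hb.induce _) (by rw [card_compl_coe_finset, ht.card_eq, hm]; omega)
  have hstep := sq_div_four_add_bookExcess_add_le r k
  have hloss : (#G.edgeFinset : ℝ) + 3 ≤
      #(G.induce (t : Set V)ᶜ).edgeFinset + (k + 3 + 3 * r) := by
    exact_mod_cast (show #G.edgeFinset + 3 ≤ _ by norm_num at hsplit; omega)
  linarith

theorem card_edgeFinset_add_choose_le [Fintype V] [DecidableEq V] [DecidableRel G.Adj]
    (hb : BookFree r G) {k : ℕ} {S : Finset V} (hS : G.IsNClique k S)
    (hk : k + 12 * r + 12 ≤ Fintype.card V) :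
    (#G.edgeFinset : ℝ) + k.choose 2 ≤
      ((Fintype.card V : ℝ) - k) ^ 2 / 4 + ∑ v ∈ S, (G.degree v : ℝ) := by
  have hsplit := card_edgeFinset_add_choose_eq hS.isClique
  rw [hS.card_eq] at hsplit
  have hrest := (hb.induce ((S : Set V)ᶜ)).card_edgeFinset_le_add_bookExcess
  rw [card_compl_coe_finset, hS.card_eq, bookExcess_eq_zero (by omega), add_zero,
    Nat.cast_sub (by omega)] at hrest
  have hsplit' : (#G.edgeFinset : ℝ) + k.choose 2 =
      #(G.induce ((S : Set V)ᶜ)).edgeFinset + ∑ v ∈ S, (G.degree v : ℝ) := by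
    exact_mod_cast hsplit
  linarith

end BookFree

lemma sq_sub_one_div_four_le (k : ℕ) : ((k : ℝ) ^ 2 - 1) / 4 ≤ (k ^ 2 / 4 : ℕ) := by
  have hmod : k ^ 2 % 4 ≤ 1 := by
    rw [Nat.pow_mod]
    have := Nat.mod_lt k (show 4 > 0 by norm_num)
    interval_cases k % 4 <;> norm_num
  have : k ^ 2 ≤ 4 * (k ^ 2 / 4) + 1 := by omega
  have : ((k ^ 2 : ℕ) : ℝ) ≤ 4 * (k ^ 2 / 4 : ℕ) + 1 := by exact_mod_cast this
  push_cast at this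
  linarith

/-- Let `r ≥ 1` and `n` sufficiently large.  If `G` is a non-bipartite `B_{r+1}`-free graph
on `n` vertices with `e(G) ≥ ⌊(n-1)²/4⌋ + 2r` and `w₁w₂w₃` is a triangle in `G` with
`d*(w₁) ≥ d*(w₂) ≥ d*(w₃)`, where `d*(wᵢ)` is the number of neighbours of `wᵢ` outside
`{w₁, w₂, w₃}`, then `d*(w₁) > n/3 - 2` and `d*(w₂) ≥ n/4 - 1`. -/
theorem stmt_14 (r : ℕ) (hr : 1 ≤ r) :
    ∃ n₀ : ℕ, ∀ n : ℕ, n₀ ≤ n →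
      ∀ G : SimpleGraph (Fin n), ¬ G.Colorable 2 → BookFree r G →
        (n - 1) ^ 2 / 4 + 2 * r ≤ G.edgeSet.ncard →
        ∀ w1 w2 w3 : Fin n, G.Adj w1 w2 → G.Adj w2 w3 → G.Adj w3 w1 →
          degIn G ({w1, w2, w3}ᶜ) w2 ≤ degIn G ({w1, w2, w3}ᶜ) w1 →
          degIn G ({w1, w2, w3}ᶜ) w3 ≤ degIn G ({w1, w2, w3}ᶜ) w2 →
          (n : ℝ) / 3 - 2 < (degIn G ({w1, w2, w3}ᶜ) w1 : ℝ) ∧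
          (n : ℝ) / 4 - 1 ≤ (degIn G ({w1, w2, w3}ᶜ) w2 : ℝ) := by
  classical
  refine ⟨12 * r + 15, fun n hn G _ hb hE w1 w2 w3 h12 h23 h31 hd21 hd32 => ?_⟩
  have hT : G.IsNClique 3 {w1, w2, w3} := is3Clique_triple_iff.2 ⟨h12, h31.symm, h23⟩
  have hP : G.IsNClique 2 {w2, w3} :=
    (isNClique_iff G).2 ⟨by simpa using fun _ => h23, card_pair h23.ne⟩
  have hdeg : ∀ v ∈ ({w1, w2, w3} : Finset (Fin n)),
      (G.degree v : ℝ) = degIn G ({w1, w2, w3}ᶜ) v + 2 := fun v hv => by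
    rw [← degIn_compl_add_card_sub_one hT.isClique hv, hT.card_eq]
    simp
  have hdelT := hb.card_edgeFinset_add_choose_le hT (by simp; omega)
  have hdelP := hb.card_edgeFinset_add_choose_le hP (by simp; omega)
  rw [Finset.sum_insert (by simp [h12.ne, h31.ne']), Finset.sum_pair h23.ne,
    hdeg w1 (by simp), hdeg w2 (by simp), hdeg w3 (by simp)] at hdelT
  rw [Finset.sum_pair h23.ne, hdeg w2 (by simp), hdeg w3 (by simp)] at hdelP
  rw [Fintype.card_fin] at hdelT hdelP
  norm_num at hdelT hdelP
  have hedges : (((n : ℝ) - 1) ^ 2 - 1) / 4 + 2 * r ≤ #G.edgeFinset := by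
    have hfloor := sq_sub_one_div_four_le (n - 1)
    rw [Nat.cast_sub (by omega), Nat.cast_one] at hfloor
    rw [← coe_edgeFinset, Set.ncard_coe_finset] at hE
    have : (((n - 1) ^ 2 / 4 + 2 * r : ℕ) : ℝ) ≤ #G.edgeFinset := by exact_mod_cast hE
    push_cast at this
    linarith
  have hr' : (1 : ℝ) ≤ r := by exact_mod_cast hr
  have hd21' : (degIn G ({w1, w2, w3}ᶜ) w2 : ℝ) ≤ degIn G ({w1, w2, w3}ᶜ) w1 := by
    exact_mod_cast hd21
  have hd32' : (degIn G ({w1, w2, w3}ᶜ) w3 : ℝ) ≤ degIn G ({w1, w2, w3}ᶜ) w2 := by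
    exact_mod_cast hd32
  constructor <;> nlinarith
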